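/- For each prime n ≥ 3, if G is the graph of Construction 1, then χ_ℓ(G²) − χ(G²) > n² − 6n + 3, where G² is the square of G. -/

import Mathlib

open SimpleGraph

/-- Entry of the Latin square `L_i`:  `L_i(j,k) ≡ j + i·(k-1) (mod n)`, with
indices and entries taken in `ZMod n` (identifying `[n] = {1,…,n}` with `ZMod n`). -/
def latinL (n : ℕ) (i j k : ZMod n) : ZMod n := j + i * (k - 1)

/-- The vertices of the graph `G` of Construction 1:
`pv k m l` is `v_{k,m}^l ∈ P`, `qv i j` is `w_{i,j} ∈ Q` (with `i ≠ 0`, i.e. `i ∈ [n-1]`),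
`rv i j` is `u_{i,j} ∈ R`, and `sv m` is `s_m ∈ S`. -/
inductive Vert (n : ℕ) : Type
  | pv (k m l : ZMod n) : Vert n
  | qv (i : {x : ZMod n // x ≠ 0}) (j : ZMod n) : Vert n
  | rv (i : {x : ZMod n // x ≠ 0}) (j : ZMod n) : Vert n
  | sv (m : ZMod n) : Vert n

/-- One-directional description of the edges of Construction 1:
`w_{i,j}` is adjacent to `v_{k, L_i(j,k)}^l` for all `k, l`;
`u_{i,j}` is adjacent to every vertex of `T_{l, L_i(j,l)}` for every `l`;
`s_m` is adjacent to every vertex of `T_{l,m}` for every `l`. -/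
def rel {n : ℕ} : Vert n → Vert n → Prop
  | .qv i j, .pv k m _ => m = latinL n i.1 j k
  | .rv i j, .pv _ m l => m = latinL n i.1 j l
  | .sv m', .pv _ m _ => m = m'
  | _, _ => False

/-- The bipartite graph `G` of Construction 1. -/
def GraphG (n : ℕ) : SimpleGraph (Vert n) where
  Adj x y := rel x y ∨ rel y x
  symm := ⟨fun _ _ h => h.symm⟩
  loopless := ⟨by intro x h; cases x <;> simp [rel] at h⟩

/-- The square `G²` of a graph `G`: two distinct vertices are adjacent iff
their distance in `G` is at most 2 (i.e. they are adjacent or have a common neighbor). -/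
def square {V : Type*} (G : SimpleGraph V) : SimpleGraph V where
  Adj x y := x ≠ y ∧ (G.Adj x y ∨ ∃ z, G.Adj x z ∧ G.Adj z y)
  symm := by
    refine ⟨?_⟩
    rintro x y ⟨hxy, h | ⟨z, h1, h2⟩⟩
    · exact ⟨hxy.symm, Or.inl h.symm⟩
    · exact ⟨hxy.symm, Or.inr ⟨z, h2.symm, h1.symm⟩⟩
  loopless := ⟨fun x h => h.1 rfl⟩

/-- `P_k^l = {v_{k,1}^l, …, v_{k,n}^l}`. -/
def Pkl (n : ℕ) (k l : ZMod n) : Set (Vert n) := {x | ∃ m, x = Vert.pv k m l}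

/-- `P^l = P_1^l ∪ ⋯ ∪ P_n^l`. -/
def PlSet (n : ℕ) (l : ZMod n) : Set (Vert n) := {x | ∃ k m, x = Vert.pv k m l}

/-- `P = P^1 ∪ ⋯ ∪ P^n`. -/
def Pset (n : ℕ) : Set (Vert n) := {x | ∃ k m l, x = Vert.pv k m l}

/-- `T_{l,m} = {v_{1,m}^l, …, v_{n,m}^l}`. -/
def Tlm (n : ℕ) (l m : ZMod n) : Set (Vert n) := {x | ∃ k, x = Vert.pv k m l}

/-- `Q_i = {w_{i,1}, …, w_{i,n}}`. -/
def QiSet (n : ℕ) (i : {x : ZMod n // x ≠ 0}) : Set (Vert n) := {x | ∃ j, x = Vert.qv i j}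

/-- `Q = Q_1 ∪ ⋯ ∪ Q_{n-1}`. -/
def Qset (n : ℕ) : Set (Vert n) := {x | ∃ i j, x = Vert.qv i j}

/-- `R_i = {u_{i,1}, …, u_{i,n}}`. -/
def RiSet (n : ℕ) (i : {x : ZMod n // x ≠ 0}) : Set (Vert n) := {x | ∃ j, x = Vert.rv i j}

/-- `R = R_1 ∪ ⋯ ∪ R_{n-1}`. -/
def Rset (n : ℕ) : Set (Vert n) := {x | ∃ i j, x = Vert.rv i j}

/-- `S = {s_1, …, s_n}`. -/
def Sset (n : ℕ) : Set (Vert n) := {x | ∃ m, x = Vert.sv m}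

/-- `G_l`, the subgraph of `G` induced by `P^l ∪ Q` (kept on the same vertex type:
all edges of `G` with both endpoints in `P^l ∪ Q`). -/
def Gl (n : ℕ) (l : ZMod n) : SimpleGraph (Vert n) where
  Adj x y := (GraphG n).Adj x y ∧ x ∈ PlSet n l ∪ Qset n ∧ y ∈ PlSet n l ∪ Qset n
  symm := ⟨fun _ _ ⟨h, hx, hy⟩ => ⟨h.symm, hy, hx⟩⟩
  loopless := ⟨fun x h => (GraphG n).irrefl h.1⟩

/-- `G` is `k`-choosable: for every list assignment with all lists of size at least `k`
there is a proper coloring choosing each color from the corresponding list. -/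
def Choosable {V : Type*} (G : SimpleGraph V) (k : ℕ) : Prop :=
  ∀ L : V → Finset ℕ, (∀ v, k ≤ (L v).card) →
    ∃ φ : V → ℕ, (∀ v, φ v ∈ L v) ∧ ∀ ⦃v w⦄, G.Adj v w → φ v ≠ φ w

/-- The list chromatic number `χ_ℓ(G)`: the least `k` such that `G` is `k`-choosable. -/
noncomputable def listChromaticNumber {V : Type*} (G : SimpleGraph V) : ℕ :=
  sInf {k | Choosable G k}

/-!
In `G²` the `n²` parts `P_k^l` are pairwise completely joined: two vertices of distinct parts
share a neighbour `s_m`, `w_{i,j}` or `u_{i,j}`, because two points of `𝔽_n²` with distinct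
coordinates lie on a line of nonzero slope. Give `v_{k,m}^l` the union of the `n - 1` disjoint
blocks `Y_{m'}`, `m' ≠ m`, of `2(n - 1)` colours each. Then no part is monochromatic, so a list
colouring would need `2n²` colours out of the `2n(n - 1)` available, and `χ_ℓ(G²) > 2(n - 1)²`.
On the other hand each of `P_k^l`, `Q_i`, `R_i` and `S` is independent in `G²`, so
`χ(G²) ≤ n² + 2(n - 1) + 1`.
-/

open Finset Function

section ListColoring

variable {V : Type*} {G : SimpleGraph V}

theorem Choosable.mono {k k' : ℕ} (hk : k ≤ k') (h : Choosable G k) : Choosable G k' :=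
  fun L hL => h L fun v => hk.trans (hL v)

-- Any lists of size `|V|` satisfy Hall's condition, and an injective choice is proper.
theorem choosable_card [Fintype V] : Choosable G (Fintype.card V) := by
  intro L hL
  have hall : ∀ s : Finset V, s.card ≤ (s.biUnion L).card := by
    intro s
    obtain rfl | ⟨x, hx⟩ := s.eq_empty_or_nonempty
    · simp
    · calc s.card ≤ Fintype.card V := card_le_univ s
        _ ≤ (L x).card := hL x
        _ ≤ (s.biUnion L).card := card_le_card (subset_biUnion_of_mem L hx)
  obtain ⟨φ, hφinj, hφL⟩ := (all_card_le_biUnion_card_iff_existsInjective' L).mp hall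
  exact ⟨φ, hφL, fun _ _ hadj hφ => G.ne_of_adj hadj (hφinj hφ)⟩

theorem lt_listChromaticNumber_of_not_choosable [Finite V] {k : ℕ} (h : ¬ Choosable G k) :
    k < listChromaticNumber G := by
  have := Fintype.ofFinite V
  by_contra! hle
  have hmin : Choosable G (listChromaticNumber G) :=
    Nat.sInf_mem (s := {k | Choosable G k}) ⟨_, choosable_card⟩
  exact h (hmin.mono hle)

theorem two_mul_card_le_of_forall_adj {ι α : Type*} [Fintype ι] (v : ι → α → V)
    (hadj : ∀ i j, i ≠ j → ∀ a b, G.Adj (v i a) (v j b)) {φ : V → ℕ}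
    (hφ : ∀ ⦃x y⦄, G.Adj x y → φ x ≠ φ y) (hsplit : ∀ i, ∃ a b, φ (v i a) ≠ φ (v i b))
    {C : Finset ℕ} (hC : ∀ i a, φ (v i a) ∈ C) : 2 * Fintype.card ι ≤ C.card := by
  choose a b hab using hsplit
  let f : ι × Bool → C := fun p => ⟨φ (v p.1 (if p.2 then a p.1 else b p.1)), hC _ _⟩
  have hf : Injective f := by
    rintro ⟨i, s⟩ ⟨j, t⟩ h
    simp only [f, Subtype.mk.injEq] at h
    by_cases hij : i = j
    · subst hij
      cases s <;> cases t <;> simp_all [eq_comm]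
    · exact absurd h (hφ (hadj i j hij _ _))
  simpa [mul_comm] using Fintype.card_le_of_injective f hf

end ListColoring

section CoverLists

variable {α β : Type*} [Fintype α] [DecidableEq α] [DecidableEq β] {Y : α → Finset β}

theorem exists_ne_of_forall_mem_biUnion_erase [Nonempty α] (hY : Pairwise (Disjoint on Y))
    {f : α → β} (hf : ∀ a, f a ∈ (univ.erase a).biUnion Y) : ∃ a b, f a ≠ f b := by
  by_contra! hconst
  obtain ⟨a₀⟩ := ‹Nonempty α›
  obtain ⟨b, -, hfb⟩ := mem_biUnion.mp (hf a₀)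
  obtain ⟨c, hc, hfc⟩ := mem_biUnion.mp (hf b)
  rw [hconst b a₀] at hfc
  have hbc : b = c := by
    by_contra h
    exact disjoint_left.mp (hY h) hfb hfc
  exact ne_of_mem_erase hc hbc.symm

theorem card_biUnion_erase (hY : Pairwise (Disjoint on Y)) {d : ℕ} (hd : ∀ a, (Y a).card = d)
    (a : α) : ((univ.erase a).biUnion Y).card = (Fintype.card α - 1) * d := by
  rw [card_biUnion fun x _ y _ hxy => hY hxy, sum_congr rfl fun x _ => hd x, sum_const,
    card_erase_of_mem (mem_univ a), card_univ, smul_eq_mul]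

end CoverLists

section Construction

variable {n : ℕ}

instance [NeZero n] : Finite (Vert n) :=
  Finite.of_surjective
    (fun x : (ZMod n × ZMod n × ZMod n) ⊕ ({x : ZMod n // x ≠ 0} × ZMod n) ⊕
        ({x : ZMod n // x ≠ 0} × ZMod n) ⊕ ZMod n =>
      match x with
      | .inl (k, m, l) => Vert.pv k m l
      | .inr (.inl (i, j)) => .qv i j
      | .inr (.inr (.inl (i, j))) => .rv i j
      | .inr (.inr (.inr m)) => .sv m)
    fun
      | .pv k m l => ⟨.inl (k, m, l), rfl⟩
      | .qv i j => ⟨.inr (.inl (i, j)), rfl⟩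
      | .rv i j => ⟨.inr (.inr (.inl (i, j))), rfl⟩
      | .sv m => ⟨.inr (.inr (.inr m)), rfl⟩

theorem exists_latinL_eq_of_ne [Fact n.Prime] {a a' m m' : ZMod n} (ha : a ≠ a') (hm : m ≠ m') :
    ∃ i ≠ 0, ∃ j, m = latinL n i j a ∧ m' = latinL n i j a' := by
  have ha' : a - a' ≠ 0 := sub_ne_zero.mpr ha
  refine ⟨(m - m') / (a - a'), div_ne_zero (sub_ne_zero.mpr hm) ha',
    m - (m - m') / (a - a') * (a - 1), by unfold latinL; ring, ?_⟩
  unfold latinL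
  field_simp
  ring

theorem square_adj_pv [Fact n.Prime] {k l k' l' : ZMod n} (h : (k, l) ≠ (k', l'))
    (m m' : ZMod n) : (square (GraphG n)).Adj (.pv k m l) (.pv k' m' l') := by
  refine ⟨fun he => h (by cases he; rfl), Or.inr ?_⟩
  by_cases hm : m = m'
  · exact ⟨.sv m, Or.inr rfl, Or.inl hm.symm⟩
  by_cases hl : l = l'
  · have hk : k ≠ k' := fun hk => h (by rw [hk, hl])
    obtain ⟨i, hi, j, h₁, h₂⟩ := exists_latinL_eq_of_ne hk hm
    exact ⟨.qv ⟨i, hi⟩ j, Or.inr h₁, Or.inl h₂⟩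
  · obtain ⟨i, hi, j, h₁, h₂⟩ := exists_latinL_eq_of_ne hl hm
    exact ⟨.rv ⟨i, hi⟩ j, Or.inr h₁, Or.inl h₂⟩

def colorClass : Vert n → (ZMod n × ZMod n) ⊕ {x : ZMod n // x ≠ 0} ⊕ {x : ZMod n // x ≠ 0} ⊕ Unit
  | .pv k _ l => .inl (k, l)
  | .qv i _ => .inr (.inl i)
  | .rv i _ => .inr (.inr (.inl i))
  | .sv _ => .inr (.inr (.inr ()))

theorem not_square_adj_of_colorClass_eq {x y : Vert n} (h : colorClass x = colorClass y) :
    ¬ (square (GraphG n)).Adj x y := by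
  rintro ⟨hne, hxy | ⟨z, hxz, hzy⟩⟩
  · cases x <;> cases y <;> simp_all [colorClass, GraphG, rel]
  · cases x <;> cases y <;> cases z <;> simp_all [colorClass, GraphG, rel, latinL]

theorem chromaticNumber_square_toNat_le [NeZero n] :
    (square (GraphG n)).chromaticNumber.toNat ≤ n ^ 2 + 2 * (n - 1) + 1 := by
  have hcol := (Coloring.mk colorClass fun hadj h =>
    not_square_adj_of_colorClass_eq (n := n) h hadj).colorable
  refine ENat.toNat_le_of_le_natCast (hcol.chromaticNumber_le.trans_eq ?_)
  simp [Fintype.card_subtype_compl, ZMod.card]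
  ring

end Construction

section BadLists

variable {n : ℕ}

def colorBlock (d : ℕ) (m : ZMod n) : Finset ℕ := (range d).image (Nat.pair m.val)

theorem card_colorBlock (d : ℕ) (m : ZMod n) : (colorBlock d m).card = d := by
  rw [colorBlock, card_image_of_injective _ fun _ _ h => (Nat.pair_eq_pair.mp h).2, card_range]

theorem pairwise_disjoint_colorBlock [NeZero n] (d : ℕ) :
    Pairwise (Disjoint on colorBlock (n := n) d) := by
  intro m m' hm
  simp only [onFun, colorBlock, Finset.disjoint_left, mem_image]
  rintro _ ⟨r, -, rfl⟩ ⟨r', -, h⟩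
  exact hm (ZMod.val_injective n (Nat.pair_eq_pair.mp h).1.symm)

def badList [NeZero n] : Vert n → Finset ℕ
  | .pv _ m _ => (univ.erase m).biUnion (colorBlock (2 * (n - 1)))
  | _ => range (2 * (n - 1) ^ 2)

theorem card_badList [NeZero n] (x : Vert n) : (badList x).card = 2 * (n - 1) ^ 2 := by
  cases x with
  | pv k m l =>
    rw [badList, card_biUnion_erase (pairwise_disjoint_colorBlock _) (card_colorBlock _),
      ZMod.card]
    ring
  | _ => simp [badList]

theorem not_choosable_square [Fact n.Prime] :
    ¬ Choosable (square (GraphG n)) (2 * (n - 1) ^ 2) := by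
  intro h
  obtain ⟨φ, hφL, hφ⟩ := h badList fun x => (card_badList x).ge
  have hsplit (p : ZMod n × ZMod n) : ∃ a b, φ (.pv p.1 a p.2) ≠ φ (.pv p.1 b p.2) :=
    exists_ne_of_forall_mem_biUnion_erase (pairwise_disjoint_colorBlock _)
      fun m => hφL (.pv p.1 m p.2)
  have hC (p : ZMod n × ZMod n) (m : ZMod n) :
      φ (.pv p.1 m p.2) ∈ univ.biUnion (colorBlock (2 * (n - 1))) :=
    biUnion_subset_biUnion_of_subset_left _ (erase_subset _ _) (hφL (.pv p.1 m p.2))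
  have hlower := two_mul_card_le_of_forall_adj (fun p m => Vert.pv p.1 m p.2)
    (fun p q hpq a b => square_adj_pv hpq a b) hφ hsplit hC
  have hupper := card_biUnion_le_card_mul univ (colorBlock (n := n) (2 * (n - 1))) _
    fun m _ => (card_colorBlock _ m).le
  simp only [Fintype.card_prod, ZMod.card, card_univ] at hlower hupper
  have hn₁ : 1 ≤ n := NeZero.one_le
  zify [hn₁] at hlower hupper
  linarith

end BadLists

theorem stmt_17_general (n : ℕ) (hn : n.Prime) :
    (n : ℤ) ^ 2 - 6 * (n : ℤ) + 3 <
      (listChromaticNumber (square (GraphG n)) : ℤ) -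
        ((square (GraphG n)).chromaticNumber.toNat : ℤ) := by
  have := Fact.mk hn
  have hn₁ : 1 ≤ n := hn.one_lt.le
  have hχℓ : 2 * (n - 1) ^ 2 < listChromaticNumber (square (GraphG n)) :=
    lt_listChromaticNumber_of_not_choosable (not_choosable_square (n := n))
  have hχ := chromaticNumber_square_toNat_le (n := n)
  zify [hn₁] at hχℓ hχ
  linarith

/-- `χ_ℓ(G²) - χ(G²) > n² - 6n + 3` (as integers). -/
theorem stmt_17 (n : ℕ) (hn : n.Prime) (hn3 : 3 ≤ n) :
    (n : ℤ) ^ 2 - 6 * (n : ℤ) + 3 <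
      (listChromaticNumber (square (GraphG n)) : ℤ) -
        ((square (GraphG n)).chromaticNumber.toNat : ℤ) :=
  stmt_17_general n hn
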